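/- Let x̄ be a local optimal solution of the problem min f(x) subject to g(x) ∈ Λ, with f, g twice continuously differentiable and Λ closed. Suppose g(x) − Λ is metrically subregular at (x̄, 0) in a direction d belonging to the critical cone C(x̄) = {d : ∇g(x̄)d ∈ T_Λ(g(x̄)), ∇f(x̄)d ≤ 0}. Then ∇f(x̄)d = 0. -/

import Mathlib

/-!
Take `t k ↓ 0` and `v k → g'(x̄) d` with `g x̄ + t k • v k ∈ Λ`. Then
`dist (g (x̄ + t k • d), Λ) = o(t k)`, and since the points `x̄ + t k • d` lie on the ray
through `d`, they belong to every directional neighbourhood of `d`; directional subregularity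
therefore gives `dist (x̄ + t k • d, g⁻¹ Λ) = o(t k)`, i.e. `d` is tangent to the feasible set.
First-order optimality along tangent directions yields `f'(x̄) d ≥ 0`, the reverse of the
critical-cone inequality.
-/

open Filter Topology Pointwise RealInnerProductSpace

section Defs
variable {E F : Type*}
variable [NormedAddCommGroup E] [InnerProductSpace ℝ E]
variable [NormedAddCommGroup F] [InnerProductSpace ℝ F]

/-- Bouligand (contingent) tangent cone, via sequences. -/
def tangentCone' (S : Set E) (x : E) : Set E :=
  {d | ∃ t : ℕ → ℝ, ∃ v : ℕ → E, (∀ k, 0 < t k) ∧ Tendsto t atTop (𝓝 0) ∧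
    Tendsto v atTop (𝓝 d) ∧ ∀ k, x + t k • v k ∈ S}

/-- Outer second-order tangent set. -/
def tangentCone2 (S : Set E) (x d : E) : Set E :=
  {w | ∃ t : ℕ → ℝ, ∃ v : ℕ → E, (∀ k, 0 < t k) ∧ Tendsto t atTop (𝓝 0) ∧
    Tendsto v atTop (𝓝 w) ∧ ∀ k, x + t k • d + ((t k)^2 / 2) • v k ∈ S}

/-- Regular (Fréchet) normal cone. -/
def frechetNormal (S : Set E) (x : E) : Set E :=
  {v | ∀ ε > (0:ℝ), ∃ δ > (0:ℝ), ∀ y ∈ S, ‖y - x‖ ≤ δ → ⟪v, y - x⟫ ≤ ε * ‖y - x‖}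

/-- Limiting (Mordukhovich) normal cone. -/
def limNormal (S : Set E) (x : E) : Set E :=
  {v | ∃ xk vk : ℕ → E, (∀ k, xk k ∈ S) ∧ Tendsto xk atTop (𝓝 x) ∧
    Tendsto vk atTop (𝓝 v) ∧ ∀ k, vk k ∈ frechetNormal S (xk k)}

/-- Directional limiting normal cone. -/
def dirLimNormal (S : Set E) (x d : E) : Set E :=
  {v | ∃ t : ℕ → ℝ, ∃ dk vk : ℕ → E, (∀ k, 0 < t k) ∧ Tendsto t atTop (𝓝 0) ∧
    Tendsto dk atTop (𝓝 d) ∧ Tendsto vk atTop (𝓝 v) ∧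
    ∀ k, vk k ∈ frechetNormal S (x + t k • dk k)}

/-- Directional regular (Clarke) tangent cone. -/
def dirRegTangent (S : Set E) (x d : E) : Set E :=
  {v | ∀ t : ℕ → ℝ, ∀ dk : ℕ → E, (∀ k, 0 < t k) → Tendsto t atTop (𝓝 0) →
    Tendsto dk atTop (𝓝 d) → (∀ k, x + t k • dk k ∈ S) →
    ∃ vk : ℕ → E, Tendsto vk atTop (𝓝 v) ∧ ∀ k, vk k ∈ tangentCone' S (x + t k • dk k)}

/-- Regular (Clarke) tangent cone, via sequences. -/
def clarkeTangent (S : Set E) (x : E) : Set E :=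
  {v | ∀ t : ℕ → ℝ, ∀ xk : ℕ → E, (∀ k, 0 < t k) → Tendsto t atTop (𝓝 0) →
    (∀ k, xk k ∈ S) → Tendsto xk atTop (𝓝 x) →
    ∃ vk : ℕ → E, Tendsto vk atTop (𝓝 v) ∧ ∀ k, xk k + t k • vk k ∈ S}

/-- Polar cone. -/
def polarCone (K : Set E) : Set E := {v | ∀ w ∈ K, ⟪v, w⟫ ≤ 0}

/-- Directional neighborhood V_{ρ,δ}(d). -/
def dirNbhd (ρ δ : ℝ) (d : E) : Set E :=
  {w | ‖w‖ < ρ ∧ ‖‖d‖ • w - ‖w‖ • d‖ ≤ δ * (‖w‖ * ‖d‖)}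

/-- Metric subregularity of x ↦ g(x) - Λ at (x,0) in direction d. -/
def dirMetrSubreg (g : E → F) (Λ : Set F) (x d : E) : Prop :=
  ∃ κ > (0:ℝ), ∃ ρ > (0:ℝ), ∃ δ > (0:ℝ), ∀ y : E, y - x ∈ dirNbhd ρ δ d →
    Metric.infDist y {z | g z ∈ Λ} ≤ κ * Metric.infDist (g y) Λ

/-- Metric subregularity in direction d with modulus κ. -/
def dirMetrSubregMod (g : E → F) (Λ : Set F) (x d : E) (κ : ℝ) : Prop :=
  ∀ κ' > κ, ∃ ρ > (0:ℝ), ∃ δ > (0:ℝ), ∀ y : E, y - x ∈ dirNbhd ρ δ d →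
    Metric.infDist y {z | g z ∈ Λ} ≤ κ' * Metric.infDist (g y) Λ

/-- Support function, with values in EReal. -/
noncomputable def suppFn (S : Set E) (l : E) : EReal :=
  sSup ((fun u => ((⟪l, u⟫ : ℝ) : EReal)) '' S)

/-- Lower generalized support function. -/
noncomputable def sigmaHat (S : Set E) (l : E) : EReal :=
  liminf (fun l' => sInf ((fun u => ((⟪l', u⟫ : ℝ) : EReal)) '' {u | l' ∈ limNormal S u})) (𝓝 l)

end Defs

open Asymptotics Metric

section NormedSpace

variable {E F : Type*} [NormedAddCommGroup E] [NormedSpace ℝ E]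
  [NormedAddCommGroup F] [NormedSpace ℝ F]

theorem HasFDerivAt.isLittleO_add_smul {g : E → F} {B : E →L[ℝ] F} {x : E}
    (hg : HasFDerivAt g B x) (d : E) {t : ℕ → ℝ} (ht0 : Tendsto t atTop (𝓝 0)) :
    (fun k => g (x + t k • d) - g x - t k • B d) =o[atTop] t := by
  have hline : HasDerivAt (fun s : ℝ => g (x + s • d)) (B d) 0 := by
    simpa [Function.comp_def] using
      hg.comp_hasDerivAt_of_eq 0 (((hasDerivAt_id (0 : ℝ)).smul_const d).const_add x) (by simp)
  simpa [Function.comp_def] using (hasDerivAt_iff_isLittleO.1 hline).comp_tendsto ht0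

theorem HasFDerivAt.infDist_add_smul_isLittleO {g : E → F} {B : E →L[ℝ] F} {x d : E}
    {Λ : Set F} {t : ℕ → ℝ} {v : ℕ → F} (hg : HasFDerivAt g B x)
    (ht0 : Tendsto t atTop (𝓝 0)) (hv : Tendsto v atTop (𝓝 (B d)))
    (hmem : ∀ k, g x + t k • v k ∈ Λ) :
    (fun k => infDist (g (x + t k • d)) Λ) =o[atTop] t := by
  have hdir : (fun k => t k • (B d - v k)) =o[atTop] t := by
    have h1 : (fun k => B d - v k) =o[atTop] (fun _ => (1 : ℝ)) :=
      (isLittleO_one_iff ℝ).2 (by simpa using (tendsto_const_nhds (x := B d)).sub hv)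
    simpa using (isBigO_refl t atTop).smul_isLittleO h1
  refine (isBigO_of_le _ fun k => ?_).trans_isLittleO ((hg.isLittleO_add_smul d ht0).add hdir)
  have hsplit : g (x + t k • d) - (g x + t k • v k)
      = g (x + t k • d) - g x - t k • B d + t k • (B d - v k) := by
    rw [smul_sub]; abel
  rw [Real.norm_of_nonneg infDist_nonneg, ← hsplit, ← dist_eq_norm]
  exact infDist_le_dist_of_mem (hmem k)

theorem mem_posTangentConeAt_of_infDist_isLittleO {s : Set E} {x d : E} {t : ℕ → ℝ}
    (hs : s.Nonempty) (ht : ∀ k, 0 < t k) (ht0 : Tendsto t atTop (𝓝 0))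
    (hdist : (fun k => infDist (x + t k • d) s) =o[atTop] t) :
    d ∈ posTangentConeAt s x := by
  have hnear : ∀ k, ∃ y ∈ s, dist (x + t k • d) y < infDist (x + t k • d) s + t k ^ 2 :=
    fun k => (infDist_lt_iff hs).1 (lt_add_of_pos_right _ (pow_pos (ht k) 2))
  choose y hys hy using hnear
  have hclose : (fun k => y k - (x + t k • d)) =o[atTop] t := by
    have hsq : (fun k => t k ^ 2) =o[atTop] t := by
      simpa [pow_two] using ((isLittleO_one_iff ℝ).2 ht0).mul_isBigO (isBigO_refl t atTop)
    refine (isBigO_of_le _ fun k => ?_).trans_isLittleO (hdist.add hsq)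
    rw [← dist_eq_norm, dist_comm]
    exact (hy k).le.trans (le_abs_self _)
  set u := fun k => (t k)⁻¹ • (y k - x)
  have hu : Tendsto u atTop (𝓝 d) := by
    have hshift : ∀ k, u k = (t k)⁻¹ • (y k - (x + t k • d)) + d := fun k => by
      simp only [u, smul_sub, smul_add, inv_smul_smul₀ (ht k).ne']; abel
    simpa [← hshift] using hclose.tendsto_inv_smul_nhds_zero.add_const d
  have hstep : ∀ k, y k - x = t k • u k := fun k => by simp [u, smul_inv_smul₀ (ht k).ne']
  refine mem_tangentConeAt_of_seq atTop (fun k => ⟨(t k)⁻¹, (inv_pos.2 (ht k)).le⟩)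
    (fun k => y k - x) ?_ (Eventually.of_forall fun k => by simpa using hys k) hu
  simpa [hstep] using ht0.smul hu

end NormedSpace

section InnerProductSpace

variable {E F : Type*} [NormedAddCommGroup E] [InnerProductSpace ℝ E] [NormedAddCommGroup F]

theorem smul_mem_dirNbhd {ρ δ t : ℝ} {d : E} (ht : 0 ≤ t) (hδ : 0 ≤ δ) (hρ : ‖t • d‖ < ρ) :
    t • d ∈ dirNbhd ρ δ d := by
  refine ⟨hρ, ?_⟩
  rw [norm_smul, Real.norm_of_nonneg ht, smul_smul, mul_comm, sub_self, norm_zero]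
  positivity

theorem dirMetrSubreg.infDist_add_smul_isLittleO {g : E → F} {Λ : Set F} {x d : E}
    {t : ℕ → ℝ} (hM : dirMetrSubreg g Λ x d) (ht : ∀ k, 0 ≤ t k)
    (ht0 : Tendsto t atTop (𝓝 0))
    (hΛ : (fun k => infDist (g (x + t k • d)) Λ) =o[atTop] t) :
    (fun k => infDist (x + t k • d) {z | g z ∈ Λ}) =o[atTop] t := by
  obtain ⟨κ, -, ρ, hρ, δ, hδ, hsub⟩ := hM
  have hray : ∀ᶠ k in atTop, ‖t k • d‖ < ρ := by
    simpa using ((ht0.smul_const d).norm).eventually_lt_const (by simpa using hρ)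
  refine IsBigO.trans_isLittleO (IsBigO.of_bound κ ?_) hΛ
  filter_upwards [hray] with k hk
  rw [Real.norm_of_nonneg infDist_nonneg, Real.norm_of_nonneg infDist_nonneg]
  exact hsub _ (by simpa using smul_mem_dirNbhd (ht k) hδ.le hk)

end InnerProductSpace

theorem stmt_14_general {n m : ℕ} (f : EuclideanSpace ℝ (Fin n) → ℝ)
    (g : EuclideanSpace ℝ (Fin n) → EuclideanSpace ℝ (Fin m))
    (hf : ContDiff ℝ 2 f) (hg : ContDiff ℝ 2 g)
    (Λ : Set (EuclideanSpace ℝ (Fin m)))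
    (xb : EuclideanSpace ℝ (Fin n)) (hx : g xb ∈ Λ)
    (hmin : IsLocalMinOn f {x | g x ∈ Λ} xb)
    (d : EuclideanSpace ℝ (Fin n))
    (hd1 : fderiv ℝ g xb d ∈ tangentCone' Λ (g xb)) (hd2 : fderiv ℝ f xb d ≤ 0)
    (hM : dirMetrSubreg g Λ xb d) :
    fderiv ℝ f xb d = 0 := by
  obtain ⟨t, v, ht, ht0, hv, hmem⟩ := hd1
  have hgΛ :=
    (hg.differentiable two_ne_zero xb).hasFDerivAt.infDist_add_smul_isLittleO ht0 hv hmem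
  have hfeas := hM.infDist_add_smul_isLittleO (fun k => (ht k).le) ht0 hgΛ
  have hd : d ∈ posTangentConeAt {x | g x ∈ Λ} xb :=
    mem_posTangentConeAt_of_infDist_isLittleO ⟨xb, hx⟩ ht ht0 hfeas
  have hfd := (hf.differentiable two_ne_zero xb).hasFDerivAt
  exact le_antisymm hd2 (hmin.hasFDerivWithinAt_nonneg hfd.hasFDerivWithinAt hd)

theorem stmt_14 {n m : ℕ} (f : EuclideanSpace ℝ (Fin n) → ℝ)
    (g : EuclideanSpace ℝ (Fin n) → EuclideanSpace ℝ (Fin m))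
    (hf : ContDiff ℝ 2 f) (hg : ContDiff ℝ 2 g)
    (Λ : Set (EuclideanSpace ℝ (Fin m))) (hΛ : IsClosed Λ)
    (xb : EuclideanSpace ℝ (Fin n)) (hx : g xb ∈ Λ)
    (hmin : IsLocalMinOn f {x | g x ∈ Λ} xb)
    (d : EuclideanSpace ℝ (Fin n))
    (hd1 : fderiv ℝ g xb d ∈ tangentCone' Λ (g xb)) (hd2 : fderiv ℝ f xb d ≤ 0)
    (hM : dirMetrSubreg g Λ xb d) :
    fderiv ℝ f xb d = 0 :=
  stmt_14_general f g hf hg Λ xb hx hmin d hd1 hd2 hM
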